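/- arXiv:0906.2717 — 3 statements merged into one kernel-verified Lean document; each statement's English description precedes it below -/
import Mathlib

section
/- Let X ≥ 0 be a random variable whose tail satisfies P(X > x) ~ c₀ x^{−α} as x → ∞ for some c₀ > 0, α > 0, and let T ≥ 0 be independent of X with E[T^{α}] < ∞ and E[T^{α+δ}] < ∞ for some δ > 0. Then P(XT > x) ~ E[T^α] · P(X > x) as x → ∞ (Breiman's lemma). -/
/-!
Write `F̄(x) = P(X > x)`. By independence, `P(XT > x) = E[F̄(x / T)]` (for `x ≥ 0` the event is
empty where `T = 0`). The power asymptotics of `F̄` give `F̄(x / t) / F̄(x) → t ^ α` for each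
`t > 0`. Since `F̄` is bounded, `F̄(y) ≤ K y ^ (-α)` for *all* `y > 0`, while `F̄(x) ≥ x ^ (-α) / K'`
for large `x`; hence `F̄(x / t) / F̄(x) ≤ K K' t ^ α` uniformly in large `x`, and dominated
convergence against `E[T ^ α] < ∞` concludes.
-/

open MeasureTheory ProbabilityTheory Filter
open Asymptotics Set Topology

section PowerTail

variable {F : ℝ → ℝ} {c α : ℝ}

theorem tendsto_comp_div_div_of_isEquivalent_rpow (hc : c ≠ 0)
    (hF : F ~[atTop] fun x => c * x ^ (-α)) {t : ℝ} (ht : 0 < t) :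
    Tendsto (fun x => F (x / t) / F x) atTop (𝓝 (t ^ α)) := by
  have hratio := (hF.comp_tendsto (tendsto_id.atTop_div_const ht)).div hF
  refine (hratio.congr_right ?_).symm.tendsto_nhds tendsto_const_nhds
  filter_upwards [eventually_gt_atTop 0] with x hx
  have hxα : 0 < x ^ (-α) := Real.rpow_pos_of_pos hx _
  simp only [Function.comp_apply, Pi.div_apply, id_eq]
  rw [Real.div_rpow hx.le ht.le, Real.rpow_neg ht.le, div_inv_eq_mul]
  field_simp

theorem exists_le_mul_rpow_neg_of_isBigO {B : ℝ} (hα : 0 ≤ α) (hFB : ∀ y, F y ≤ B)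
    (hF : F =O[atTop] fun x => x ^ (-α)) : ∃ K, ∀ y, 0 < y → F y ≤ K * y ^ (-α) := by
  obtain ⟨K, -, hK⟩ := hF.exists_pos
  obtain ⟨M, hM⟩ := eventually_atTop.mp (hK.bound.and (eventually_gt_atTop 0))
  refine ⟨max K (max B 0 * M ^ α), fun y hy => ?_⟩
  have hyα : 0 < y ^ (-α) := Real.rpow_pos_of_pos hy _
  rcases le_or_gt M y with hMy | hyM
  · obtain ⟨hbound, -⟩ := hM y hMy
    rw [Real.norm_of_nonneg hyα.le] at hbound
    calc F y ≤ K * y ^ (-α) := (le_abs_self _).trans hbound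
      _ ≤ _ := by gcongr; exact le_max_left _ _
  · have hM0 : 0 < M := hy.trans hyM
    calc F y ≤ max B 0 * 1 := by rw [mul_one]; exact (hFB y).trans (le_max_left _ _)
      _ ≤ max B 0 * (M ^ α * y ^ (-α)) := by
          gcongr
          rw [Real.rpow_neg hy.le, ← div_eq_mul_inv, one_le_div (Real.rpow_pos_of_pos hy _)]
          exact Real.rpow_le_rpow hy.le hyM.le hα
      _ ≤ _ := by rw [← mul_assoc]; gcongr; exact le_max_right _ _

theorem exists_eventually_comp_div_div_le_mul_rpow {B : ℝ} (hc : c ≠ 0) (hα : 0 ≤ α)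
    (hF0 : ∀ y, 0 ≤ F y) (hFB : ∀ y, F y ≤ B) (hF : F ~[atTop] fun x => c * x ^ (-α)) :
    ∃ C, ∀ᶠ x in atTop, ∀ t, 0 < t → F (x / t) / F x ≤ C * t ^ α := by
  obtain ⟨K, hK⟩ := exists_le_mul_rpow_neg_of_isBigO hα hFB
    (hF.isBigO.trans (isBigO_const_mul_self c _ _))
  obtain ⟨K', hK'0, hK'⟩ := ((isBigO_self_const_mul hc _ _).trans hF.symm.isBigO).exists_pos
  refine ⟨max K 0 * K', ?_⟩
  filter_upwards [hK'.bound, eventually_gt_atTop 0] with x hxF hx t ht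
  rw [Real.norm_of_nonneg (Real.rpow_nonneg hx.le _), Real.norm_of_nonneg (hF0 x)] at hxF
  refine div_le_of_le_mul₀ (hF0 x) (by positivity) ?_
  calc F (x / t) ≤ K * (x / t) ^ (-α) := hK _ (div_pos hx ht)
    _ ≤ max K 0 * (t ^ α * x ^ (-α)) := by
        rw [Real.div_rpow hx.le ht.le, Real.rpow_neg ht.le, div_inv_eq_mul, mul_comm (x ^ _)]
        gcongr
        exact le_max_left _ _
    _ ≤ max K 0 * (t ^ α * (K' * F x)) := by gcongr
    _ = max K 0 * K' * t ^ α * F x := by ring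

end PowerTail

theorem measureReal_setOf_lt_mul_of_pos (P : Measure ℝ) {x t : ℝ} (ht : 0 < t) :
    P.real {s | x < s * t} = P.real (Ioi (x / t)) := by
  congr 1
  ext s
  exact (div_lt_iff₀ ht).symm

theorem measureReal_setOf_lt_mul_zero (P : Measure ℝ) {x : ℝ} (hx : 0 ≤ x) :
    P.real {s | x < s * 0} = 0 := by
  simp [not_lt.mpr hx]

theorem measurableSet_setOf_lt_mul (x : ℝ) : MeasurableSet {p : ℝ × ℝ | x < p.1 * p.2} :=
  measurableSet_lt measurable_const (measurable_fst.mul measurable_snd)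

section ProductTail

variable {P ν : Measure ℝ}

theorem measureReal_prod_setOf_lt_mul [IsFiniteMeasure P] [SFinite ν] (x : ℝ) :
    (P.prod ν).real {p | x < p.1 * p.2} = ∫ t, P.real {s | x < s * t} ∂ν := by
  rw [measureReal_def, Measure.prod_apply_symm (measurableSet_setOf_lt_mul x),
    ← integral_toReal (measurable_measure_prodMk_right (measurableSet_setOf_lt_mul x)).aemeasurable
      (ae_of_all _ fun _ => measure_lt_top _ _)]
  rfl

theorem tendsto_measureReal_prod_setOf_lt_mul_div [IsFiniteMeasure P] [SFinite ν] {c α : ℝ}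
    (hc : c ≠ 0) (hα : 0 < α) (hν : ∀ᵐ t ∂ν, 0 ≤ t)
    (hP : (fun x => P.real (Ioi x)) ~[atTop] fun x => c * x ^ (-α))
    (hint : Integrable (fun t => t ^ α) ν) :
    Tendsto (fun x => (P.prod ν).real {p | x < p.1 * p.2} / P.real (Ioi x)) atTop
      (𝓝 (∫ t, t ^ α ∂ν)) := by
  obtain ⟨C, hC⟩ := exists_eventually_comp_div_div_le_mul_rpow hc hα.le
    (fun _ => measureReal_nonneg) (fun _ => measureReal_mono (subset_univ _)) hP
  simp_rw [measureReal_prod_setOf_lt_mul, ← integral_div]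
  refine tendsto_integral_filter_of_dominated_convergence (fun t => C * t ^ α)
    (Eventually.of_forall fun x => ?_) ?_ (hint.const_mul C) ?_
  · exact ((measurable_measure_prodMk_right (measurableSet_setOf_lt_mul x)).ennreal_toReal.div_const
      _).aestronglyMeasurable
  · filter_upwards [hC, eventually_ge_atTop 0] with x hCx hx
    filter_upwards [hν] with t ht
    rw [Real.norm_of_nonneg (div_nonneg measureReal_nonneg measureReal_nonneg)]
    rcases ht.eq_or_lt with rfl | ht
    · rw [measureReal_setOf_lt_mul_zero P hx, zero_div, Real.zero_rpow hα.ne', mul_zero]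
    · rw [measureReal_setOf_lt_mul_of_pos P ht]
      exact hCx t ht
  · filter_upwards [hν] with t ht
    rcases ht.eq_or_lt with rfl | ht
    · rw [Real.zero_rpow hα.ne']
      refine tendsto_const_nhds.congr' ?_
      filter_upwards [eventually_ge_atTop 0] with x hx
      rw [measureReal_setOf_lt_mul_zero P hx, zero_div]
    · simp_rw [measureReal_setOf_lt_mul_of_pos P ht]
      exact tendsto_comp_div_div_of_isEquivalent_rpow hc hP ht

end ProductTail

theorem breiman_lemma_general {Ω : Type*} [MeasurableSpace Ω]
    (μ : Measure Ω) [IsProbabilityMeasure μ] (X T : Ω → ℝ)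
    (hX : Measurable X) (hT : Measurable T)
    (hT0 : ∀ ω, 0 ≤ T ω)
    (hindep : IndepFun X T μ)
    (c₀ α : ℝ) (hc₀ : 0 < c₀) (hα : 0 < α)
    (htail : Tendsto (fun x : ℝ => (μ {ω | x < X ω}).toReal / (c₀ * x ^ (-α)))
      atTop (nhds 1))
    (hmomα : Integrable (fun ω => T ω ^ α) μ) :
    Tendsto (fun x : ℝ => (μ {ω | x < X ω * T ω}).toReal / (μ {ω | x < X ω}).toReal)
      atTop (nhds (∫ ω, T ω ^ α ∂μ)) := by
  have hprod : μ.map (fun ω => (X ω, T ω)) = (μ.map X).prod (μ.map T) :=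
    (indepFun_iff_map_prod_eq_prod_map_map hX.aemeasurable hT.aemeasurable).mp hindep
  have hnum (x : ℝ) : (μ {ω | x < X ω * T ω}).toReal
      = ((μ.map X).prod (μ.map T)).real {p | x < p.1 * p.2} := by
    rw [← hprod, measureReal_def, Measure.map_apply (hX.prodMk hT) (measurableSet_setOf_lt_mul x)]
    rfl
  have hden (x : ℝ) : (μ {ω | x < X ω}).toReal = (μ.map X).real (Ioi x) := by
    rw [measureReal_def, Measure.map_apply hX measurableSet_Ioi]
    rfl
  have hrpow : Measurable fun t : ℝ => t ^ α := measurable_id.pow_const α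
  have hmom : ∫ t, t ^ α ∂(μ.map T) = ∫ ω, T ω ^ α ∂μ :=
    integral_map hT.aemeasurable hrpow.aestronglyMeasurable
  simp_rw [hden] at htail
  simp_rw [hnum, hden, ← hmom]
  exact tendsto_measureReal_prod_setOf_lt_mul_div hc₀.ne' hα
    ((ae_map_iff hT.aemeasurable measurableSet_Ici).mpr (ae_of_all _ hT0))
    (isEquivalent_of_tendsto_one htail)
    ((integrable_map_measure hrpow.aestronglyMeasurable hT.aemeasurable).mpr hmomα)

theorem breiman_lemma {Ω : Type*} [MeasurableSpace Ω]
    (μ : Measure Ω) [IsProbabilityMeasure μ] (X T : Ω → ℝ)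
    (hX : Measurable X) (hT : Measurable T)
    (hX0 : ∀ ω, 0 ≤ X ω) (hT0 : ∀ ω, 0 ≤ T ω)
    (hindep : IndepFun X T μ)
    (c₀ α δ : ℝ) (hc₀ : 0 < c₀) (hα : 0 < α) (hδ : 0 < δ)
    (htail : Tendsto (fun x : ℝ => (μ {ω | x < X ω}).toReal / (c₀ * x ^ (-α)))
      atTop (nhds 1))
    (hmomα : Integrable (fun ω => T ω ^ α) μ)
    (hmomδ : Integrable (fun ω => T ω ^ (α + δ)) μ) :
    Tendsto (fun x : ℝ => (μ {ω | x < X ω * T ω}).toReal / (μ {ω | x < X ω}).toReal)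
      atTop (nhds (∫ ω, T ω ^ α ∂μ)) :=
  breiman_lemma_general μ X T hX hT hT0 hindep c₀ α hc₀ hα htail hmomα
end

section
/- Let X ≥ 0 with P(X > x) = c₀ x^{−α} exactly for all x ≥ x₀ (or with P(X > x) ~ c₀ x^{−α}), and let T ≥ 0 independent of X with E[T^α] < ∞. Then also P(XT > x) ~ c₀ E[T^α] x^{−α} as x → ∞. (Breiman's lemma under exact power tail, requiring only E T^α < ∞.) -/
open MeasureTheory ProbabilityTheory Filter Topology

/-!
Conditioning on `T` writes `P(XT > x)` as `∫ P(X t > x) dP_T(t)`. For fixed `t ≥ 0` and all large `x`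
the exact tail gives `P(X t > x) x^α = c₀ t^α`, and for `x ≥ max x₀ 1` the integrand is dominated by
a constant multiple of `t^α`, which is `P_T`-integrable because `E T^α < ∞`; dominated convergence
concludes.
-/

namespace ProbabilityTheory

theorem IndepFun.measure_mem_eq_lintegral {Ω α β : Type*} [MeasurableSpace Ω]
    [MeasurableSpace α] [MeasurableSpace β] {μ : Measure Ω} [IsFiniteMeasure μ]
    {X : Ω → α} {T : Ω → β} (hX : Measurable X) (hT : Measurable T) (hindep : IndepFun X T μ)
    {s : Set (α × β)} (hs : MeasurableSet s) :
    μ {ω | (X ω, T ω) ∈ s} = ∫⁻ t, μ {ω | (X ω, t) ∈ s} ∂(μ.map T) := by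
  change μ ((fun ω => (X ω, T ω)) ⁻¹' s) = _
  rw [← Measure.map_apply (hX.prodMk hT) hs,
    (indepFun_iff_map_prod_eq_prod_map_map hX.aemeasurable hT.aemeasurable).1 hindep,
    Measure.prod_apply_symm hs]
  exact lintegral_congr fun t => Measure.map_apply hX (measurable_prodMk_right hs)

end ProbabilityTheory

section ExactPowerTail

variable {Ω : Type*} [MeasurableSpace Ω] {μ : Measure Ω} {X : Ω → ℝ} {c₀ α x₀ : ℝ}

theorem measurable_measure_lt_mul [SFinite μ] (hX : Measurable X) (x : ℝ) :
    Measurable fun t : ℝ => μ {ω | x < X ω * t} :=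
  measurable_measure_prodMk_left
    (measurableSet_lt measurable_const ((hX.comp measurable_snd).mul measurable_fst))

variable (htail : ∀ x : ℝ, x₀ ≤ x → (μ {ω | x < X ω}).toReal = c₀ * x ^ (-α))
include htail

theorem measure_lt_mul_mul_rpow_eq (hα : 0 < α) {t x : ℝ} (ht : 0 ≤ t) (hx : 0 < x)
    (hxt : x₀ * t ≤ x) : (μ {ω | x < X ω * t}).toReal * x ^ α = c₀ * t ^ α := by
  rcases ht.eq_or_lt with rfl | ht
  · simp [hx.not_gt, Real.zero_rpow hα.ne']
  · have hset : {ω | x < X ω * t} = {ω | x / t < X ω} := by simp_rw [div_lt_iff₀ ht]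
    rw [hset, htail _ ((le_div_iff₀ ht).2 hxt), Real.rpow_neg (div_nonneg hx.le ht.le),
      Real.div_rpow hx.le ht.le]
    have hxα : 0 < x ^ α := Real.rpow_pos_of_pos hx α
    field_simp

theorem measure_lt_mul_mul_rpow_le [IsProbabilityMeasure μ] (hα : 0 < α) {x₁ t x : ℝ}
    (hx₁ : 0 < x₁) (hx₀₁ : x₀ ≤ x₁) (ht : 0 ≤ t) (hx : x₁ ≤ x) :
    (μ {ω | x < X ω * t}).toReal * x ^ α ≤ max c₀ (x₁ ^ α) * t ^ α := by
  have hx0 : 0 < x := hx₁.trans_le hx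
  rcases le_or_gt (x₁ * t) x with hle | hlt
  · rw [measure_lt_mul_mul_rpow_eq htail hα ht hx0
      ((mul_le_mul_of_nonneg_right hx₀₁ ht).trans hle)]
    exact mul_le_mul_of_nonneg_right (le_max_left _ _) (Real.rpow_nonneg ht α)
  · calc (μ {ω | x < X ω * t}).toReal * x ^ α
        ≤ 1 * (x₁ * t) ^ α := by
          gcongr
          exact measureReal_le_one
      _ = x₁ ^ α * t ^ α := by rw [one_mul, Real.mul_rpow hx₁.le ht]
      _ ≤ max c₀ (x₁ ^ α) * t ^ α := by gcongr; exact le_max_right _ _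

theorem tendsto_measure_lt_mul_mul_rpow (hα : 0 < α) {t : ℝ} (ht : 0 ≤ t) :
    Tendsto (fun x => (μ {ω | x < X ω * t}).toReal * x ^ α) atTop (𝓝 (c₀ * t ^ α)) := by
  refine tendsto_const_nhds.congr' ?_
  filter_upwards [eventually_gt_atTop 0, eventually_ge_atTop (x₀ * t)] with x hx hxt
  exact (measure_lt_mul_mul_rpow_eq htail hα ht hx hxt).symm

theorem tendsto_integral_measure_lt_mul_mul_rpow [IsProbabilityMeasure μ] (hX : Measurable X)
    (hα : 0 < α) {ν : Measure ℝ} (hν : ∀ᵐ t ∂ν, 0 ≤ t) (hint : Integrable (fun t => t ^ α) ν) :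
    Tendsto (fun x => ∫ t, (μ {ω | x < X ω * t}).toReal * x ^ α ∂ν) atTop
      (𝓝 (c₀ * ∫ t, t ^ α ∂ν)) := by
  set x₁ := max x₀ 1
  have hx₁ : 0 < x₁ := zero_lt_one.trans_le (le_max_right _ _)
  rw [← integral_const_mul]
  refine tendsto_integral_filter_of_dominated_convergence (fun t => max c₀ (x₁ ^ α) * t ^ α)
    (Eventually.of_forall fun x =>
      ((measurable_measure_lt_mul hX x).ennreal_toReal.mul_const _).aestronglyMeasurable)
    ?_ (hint.const_mul _)
    (hν.mono fun t ht => tendsto_measure_lt_mul_mul_rpow htail hα ht)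
  filter_upwards [eventually_ge_atTop x₁] with x hx
  filter_upwards [hν] with t ht
  rw [Real.norm_of_nonneg
    (mul_nonneg ENNReal.toReal_nonneg (Real.rpow_nonneg (hx₁.le.trans hx) α))]
  exact measure_lt_mul_mul_rpow_le htail hα hx₁ (le_max_left _ _) ht hx

end ExactPowerTail

theorem breiman_lemma_exact_tail_general {Ω : Type*} [MeasurableSpace Ω]
    (μ : Measure Ω) [IsProbabilityMeasure μ] (X T : Ω → ℝ)
    (hX : Measurable X) (hT : Measurable T)
    (hT0 : ∀ ω, 0 ≤ T ω)
    (hindep : IndepFun X T μ)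
    (c₀ α x₀ : ℝ) (hα : 0 < α)
    (htail : ∀ x : ℝ, x₀ ≤ x → (μ {ω | x < X ω}).toReal = c₀ * x ^ (-α))
    (hmom : Integrable (fun ω => T ω ^ α) μ) :
    Tendsto (fun x : ℝ => (μ {ω | x < X ω * T ω}).toReal / x ^ (-α))
      atTop (nhds (c₀ * ∫ ω, T ω ^ α ∂μ)) := by
  have hpow : Continuous fun t : ℝ => t ^ α := continuous_id.rpow_const fun _ => Or.inr hα.le
  have hlim := tendsto_integral_measure_lt_mul_mul_rpow htail hX hα (ν := μ.map T)
    ((ae_map_iff hT.aemeasurable measurableSet_Ici).2 (ae_of_all _ hT0))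
    ((integrable_map_measure hpow.aestronglyMeasurable hT.aemeasurable).2 hmom)
  rw [integral_map hT.aemeasurable hpow.aestronglyMeasurable] at hlim
  refine hlim.congr' ?_
  filter_upwards [eventually_gt_atTop 0] with x hx
  have hcond : μ {ω | x < X ω * T ω} = ∫⁻ t, μ {ω | x < X ω * t} ∂(μ.map T) :=
    hindep.measure_mem_eq_lintegral hX hT (s := {p | x < p.1 * p.2})
      (measurableSet_lt measurable_const (measurable_fst.mul measurable_snd))
  rw [integral_mul_const, integral_toReal (measurable_measure_lt_mul hX x).aemeasurable
    (ae_of_all _ fun _ => measure_lt_top _ _), ← hcond, Real.rpow_neg hx.le, div_inv_eq_mul]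

theorem breiman_lemma_exact_tail {Ω : Type*} [MeasurableSpace Ω]
    (μ : Measure Ω) [IsProbabilityMeasure μ] (X T : Ω → ℝ)
    (hX : Measurable X) (hT : Measurable T)
    (hX0 : ∀ ω, 0 ≤ X ω) (hT0 : ∀ ω, 0 ≤ T ω)
    (hindep : IndepFun X T μ)
    (c₀ α x₀ : ℝ) (hc₀ : 0 < c₀) (hα : 0 < α)
    (htail : ∀ x : ℝ, x₀ ≤ x → (μ {ω | x < X ω}).toReal = c₀ * x ^ (-α))
    (hmom : Integrable (fun ω => T ω ^ α) μ) :
    Tendsto (fun x : ℝ => (μ {ω | x < X ω * T ω}).toReal / x ^ (-α))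
      atTop (nhds (c₀ * ∫ ω, T ω ^ α ∂μ)) :=
  breiman_lemma_exact_tail_general μ X T hX hT hT0 hindep c₀ α x₀ hα htail hmom
end

section
/- Let (X_t) be strictly stationary and let φ_{nj}(x) = E[exp(i x S_j / a_n)] where S_j = X_1 + ⋯ + X_j. Then for all n, all d < m ≤ n and all x: |k_n(φ_{nm}(x) − 1) − n(φ_{nd}(x) − φ_{n,d−1}(x))| ≤ k_n (d−1) |φ_{nd}(x) − 1| + k_n d |φ_{n,d−1}(x) − 1| + k_n Σ_{j=d+1}^{m} E[ (|x a_n^{−1}(S_j − S_d)| ∧ 2) · (|x a_n^{−1} X_1| ∧ 2) ], where k_n = n/m (treat n = k_n m for simplicity). -/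
/-!
By stationarity `S_{j+1} - X_1 = X_2 + ⋯ + X_{j+1}` has the law of `S_j`, so with `e(y) = e^{icy}`
the increments are `φ_{j+1} - φ_j = E[e(S_{j+1} - X_1) (e(X_1) - 1)]`. Telescoping
`φ_m - 1 = ∑_{j<m} (φ_{j+1} - φ_j)` and comparing every increment with the `d`-th one, the first
`d` terms only produce the two boundary terms, while for `j ≥ d` the difference of increments is
`E[e(S_d - X_1) (e(S_{j+1} - S_d) - 1) (e(X_1) - 1)]`, which is bounded pointwise by
`|(1 - e^{iα})(1 - e^{iβ})| ≤ (|α| ∧ 2)(|β| ∧ 2)`.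
-/

open MeasureTheory ProbabilityTheory Finset Complex

lemma norm_exp_ofReal_mul_I_sub_one_le_min (θ : ℝ) : ‖cexp (θ * I) - 1‖ ≤ min |θ| 2 := by
  refine le_min ?_ ?_
  · simpa [mul_comm] using Real.norm_exp_I_mul_ofReal_sub_one_le (x := θ)
  · calc ‖cexp (θ * I) - 1‖ ≤ ‖cexp (θ * I)‖ + ‖(1 : ℂ)‖ := norm_sub_le _ _
      _ = 2 := by rw [norm_exp_ofReal_mul_I, norm_one]; norm_num

lemma norm_exp_mul_sub_one_sub_exp_mul_sub_one_le (y y' w : ℝ) :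
    ‖cexp (y' * I) * (cexp (w * I) - 1) - cexp (y * I) * (cexp (w * I) - 1)‖ ≤
      min |y' - y| 2 * min |w| 2 := by
  have hfactor : cexp (y' * I) * (cexp (w * I) - 1) - cexp (y * I) * (cexp (w * I) - 1) =
      cexp (y * I) * ((cexp (↑(y' - y) * I) - 1) * (cexp (w * I) - 1)) := by
    have hy' : cexp (y' * I) = cexp (y * I) * cexp (↑(y' - y) * I) := by
      rw [← exp_add]
      push_cast
      ring_nf
    rw [hy']
    ring
  rw [hfactor, norm_mul, norm_exp_ofReal_mul_I, one_mul, norm_mul]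
  exact mul_le_mul (norm_exp_ofReal_mul_I_sub_one_le_min _)
    (norm_exp_ofReal_mul_I_sub_one_le_min _) (norm_nonneg _) (by positivity)

section Telescoping

variable {E : Type*}

lemma sub_nsmul_sub_eq_add_sum_Ico [AddCommGroup E] (φ : ℕ → E) {d m : ℕ} (hdm : d + 1 ≤ m) :
    φ m - φ 0 - m • (φ (d + 1) - φ d) =
      (d + 1) • (φ d - φ 0) - d • (φ (d + 1) - φ 0) +
        ∑ j ∈ Ico (d + 1) m, ((φ (j + 1) - φ j) - (φ (d + 1) - φ d)) := by
  have htelescope : ∀ n, ∑ j ∈ range n, ((φ (j + 1) - φ j) - (φ (d + 1) - φ d)) =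
      φ n - φ 0 - n • (φ (d + 1) - φ d) := by
    intro n
    rw [sum_sub_distrib, sum_range_sub, sum_const, card_range]
  rw [← htelescope m, ← sum_range_add_sum_Ico _ hdm, htelescope (d + 1)]
  module

lemma norm_sub_nsmul_sub_le [SeminormedAddCommGroup E] (φ : ℕ → E) (b : ℕ → ℝ) {d m : ℕ}
    (hdm : d + 1 ≤ m)
    (hb : ∀ j ∈ Ico (d + 1) m, ‖(φ (j + 1) - φ j) - (φ (d + 1) - φ d)‖ ≤ b (j + 1)) :
    ‖φ m - φ 0 - m • (φ (d + 1) - φ d)‖ ≤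
      d * ‖φ (d + 1) - φ 0‖ + (d + 1) * ‖φ d - φ 0‖ + ∑ j ∈ Icc (d + 2) m, b j := by
  have hreindex : ∑ j ∈ Icc (d + 2) m, b j = ∑ j ∈ Ico (d + 1) m, b (j + 1) := by
    rw [sum_Ico_add', Ico_add_one_right_eq_Icc]
  rw [sub_nsmul_sub_eq_add_sum_Ico φ hdm, hreindex]
  refine (norm_add_le _ _).trans (add_le_add ?_ ((norm_sum_le _ _).trans (sum_le_sum hb)))
  refine (norm_sub_le _ _).trans ?_
  have h₁ := norm_nsmul_le (n := d + 1) (a := φ d - φ 0)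
  have h₂ := norm_nsmul_le (n := d) (a := φ (d + 1) - φ 0)
  push_cast at h₁
  linarith

end Telescoping

section Expectation

variable {Ω : Type*} [MeasurableSpace Ω] {μ : Measure Ω} [IsFiniteMeasure μ]

lemma integrable_exp_ofReal_mul_I {Y : Ω → ℝ} (hY : Measurable Y) :
    Integrable (fun ω ↦ cexp (Y ω * I)) μ :=
  .of_bound (by fun_prop) 1 (.of_forall fun ω ↦ (norm_exp_ofReal_mul_I _).le)

lemma integrable_exp_ofReal_mul_I_mul_sub_one {Y W : Ω → ℝ} (hY : Measurable Y)
    (hW : Measurable W) : Integrable (fun ω ↦ cexp (Y ω * I) * (cexp (W ω * I) - 1)) μ :=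
  .of_bound (by fun_prop) 2 (.of_forall fun ω ↦ by
    rw [norm_mul, norm_exp_ofReal_mul_I, one_mul]
    exact (norm_exp_ofReal_mul_I_sub_one_le_min _).trans (min_le_right _ _))

lemma integrable_min_abs_mul_min_abs {U V : Ω → ℝ} (hU : Measurable U) (hV : Measurable V) :
    Integrable (fun ω ↦ min |U ω| 2 * min |V ω| 2) μ := by
  have hle : ∀ u : ℝ, ‖min |u| 2‖ ≤ 2 := fun u ↦ by
    rw [Real.norm_of_nonneg (by positivity)]
    exact min_le_right _ _
  refine .of_bound (by fun_prop) (2 * 2) (.of_forall fun ω ↦ ?_)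
  rw [norm_mul]
  exact mul_le_mul (hle _) (hle _) (norm_nonneg _) zero_le_two

lemma integral_exp_add_sub_integral_exp {Y Z W : Ω → ℝ} (hY : Measurable Y)
    (hW : Measurable W) (hYZ : IdentDistrib Y Z μ μ) :
    ∫ ω, cexp (↑(Y ω + W ω) * I) ∂μ - ∫ ω, cexp (Z ω * I) ∂μ =
      ∫ ω, cexp (Y ω * I) * (cexp (W ω * I) - 1) ∂μ := by
  have hexp : Measurable fun y : ℝ ↦ cexp (y * I) := by fun_prop
  have hsame := (hYZ.comp hexp).integral_eq
  simp only [Function.comp_def] at hsame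
  rw [← hsame, ← integral_sub]
  · congr with ω
    rw [ofReal_add, add_mul, exp_add]
    ring
  · exact integrable_exp_ofReal_mul_I (hY.add hW)
  · exact integrable_exp_ofReal_mul_I hY

lemma norm_integral_exp_mul_sub_one_sub_le {Y Y' W : Ω → ℝ} (hY : Measurable Y)
    (hY' : Measurable Y') (hW : Measurable W) :
    ‖∫ ω, cexp (Y' ω * I) * (cexp (W ω * I) - 1) ∂μ -
        ∫ ω, cexp (Y ω * I) * (cexp (W ω * I) - 1) ∂μ‖ ≤
      ∫ ω, min |Y' ω - Y ω| 2 * min |W ω| 2 ∂μ := by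
  rw [← integral_sub (integrable_exp_ofReal_mul_I_mul_sub_one hY' hW)
    (integrable_exp_ofReal_mul_I_mul_sub_one hY hW)]
  refine (norm_integral_le_integral_norm _).trans (integral_mono_of_nonneg
    (.of_forall fun ω ↦ norm_nonneg _) (integrable_min_abs_mul_min_abs (hY'.sub hY) hW)
    (.of_forall fun ω ↦ norm_exp_mul_sub_one_sub_exp_mul_sub_one_le _ _ _))

end Expectation

section PartialSum

variable {Ω : Type*}

def partialSum (X : ℤ → Ω → ℝ) (j : ℕ) (ω : Ω) : ℝ := ∑ i ∈ range j, X (i + 1) ω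

lemma partialSum_succ_sub_one (X : ℤ → Ω → ℝ) (j : ℕ) (ω : Ω) :
    partialSum X (j + 1) ω - X 1 ω = partialSum (fun t ↦ X (t + 1)) j ω := by
  simp only [partialSum, sum_range_succ', Nat.cast_add, Nat.cast_one, CharP.cast_eq_zero,
    zero_add, add_sub_cancel_right]

variable [MeasurableSpace Ω] {μ : Measure Ω}

lemma measurable_partialSum {X : ℤ → Ω → ℝ} (hX : ∀ t, Measurable (X t)) (j : ℕ) :
    Measurable (partialSum X j) :=
  Finset.measurable_sum _ fun _ _ ↦ hX _

lemma ProbabilityTheory.IdentDistrib.partialSum {X X' : ℤ → Ω → ℝ}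
    (h : IdentDistrib (fun ω s ↦ X s ω) (fun ω s ↦ X' s ω) μ μ) (j : ℕ) :
    IdentDistrib (partialSum X j) (partialSum X' j) μ μ :=
  h.comp (u := fun y : ℤ → ℝ ↦ ∑ i ∈ range j, y (i + 1))
    (Finset.measurable_sum _ fun _ _ ↦ measurable_pi_apply _)

noncomputable def partialSumCharFun (μ : Measure Ω) (X : ℤ → Ω → ℝ) (c : ℝ) (j : ℕ) : ℂ :=
  ∫ ω, cexp (↑(c * partialSum X j ω) * I) ∂μ

variable [IsFiniteMeasure μ] {X : ℤ → Ω → ℝ}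

lemma partialSumCharFun_succ_sub (hX : ∀ t, Measurable (X t))
    (hshift : IdentDistrib (fun ω s ↦ X (s + 1) ω) (fun ω s ↦ X s ω) μ μ) (c : ℝ) (j : ℕ) :
    partialSumCharFun μ X c (j + 1) - partialSumCharFun μ X c j =
      ∫ ω, cexp (↑(c * (partialSum X (j + 1) ω - X 1 ω)) * I) *
        (cexp (↑(c * X 1 ω) * I) - 1) ∂μ := by
  have hlaw : IdentDistrib (fun ω ↦ c * (partialSum X (j + 1) ω - X 1 ω))
      (fun ω ↦ c * partialSum X j ω) μ μ := by
    simp_rw [partialSum_succ_sub_one]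
    exact (hshift.partialSum j).comp (measurable_const_mul c)
  have hsplit : ∀ ω, c * partialSum X (j + 1) ω =
      c * (partialSum X (j + 1) ω - X 1 ω) + c * X 1 ω := fun ω ↦ by ring
  simp only [partialSumCharFun, hsplit]
  exact integral_exp_add_sub_integral_exp
    (((measurable_partialSum hX _).sub (hX 1)).const_mul c) ((hX 1).const_mul c) hlaw

lemma norm_partialSumCharFun_increment_sub_le (hX : ∀ t, Measurable (X t))
    (hshift : IdentDistrib (fun ω s ↦ X (s + 1) ω) (fun ω s ↦ X s ω) μ μ) (c : ℝ) (d j : ℕ) :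
    ‖(partialSumCharFun μ X c (j + 1) - partialSumCharFun μ X c j) -
        (partialSumCharFun μ X c (d + 1) - partialSumCharFun μ X c d)‖ ≤
      ∫ ω, min |c * (partialSum X (j + 1) ω - partialSum X (d + 1) ω)| 2 *
        min |c * X 1 ω| 2 ∂μ := by
  have hY : ∀ i, Measurable fun ω ↦ c * (partialSum X i ω - X 1 ω) := fun i ↦
    ((measurable_partialSum hX _).sub (hX 1)).const_mul c
  simp only [partialSumCharFun_succ_sub hX hshift]
  refine (norm_integral_exp_mul_sub_one_sub_le (hY _) (hY _) ((hX 1).const_mul c)).trans_eq ?_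
  simp only [← mul_sub, sub_sub_sub_cancel_right]

end PartialSum

theorem telescoping_charFun_bound_general {Ω : Type*} [MeasurableSpace Ω]
    (μ : Measure Ω) [IsProbabilityMeasure μ]
    (X : ℤ → Ω → ℝ) (hmeas : ∀ t, Measurable (X t))
    (hstat : ∀ t : ℤ,
      μ.map (fun ω => fun s : ℤ => X (s + t) ω) = μ.map (fun ω => fun s : ℤ => X s ω))
    (a : ℝ) (k m d : ℕ) (hd : 0 < d) (hdm : d < m) (x : ℝ) :
    let S : ℕ → Ω → ℝ := fun j ω => ∑ i ∈ Finset.range j, X (i + 1) ω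
    let φ : ℕ → ℂ := fun j => ∫ ω, Complex.exp (x * S j ω / a * Complex.I) ∂μ
    ‖(k : ℂ) * (φ m - 1) - ((k * m : ℕ) : ℂ) * (φ d - φ (d - 1))‖ ≤
      (k : ℝ) * ((d : ℝ) - 1) * ‖φ d - 1‖ +
        (k : ℝ) * d * ‖φ (d - 1) - 1‖ +
        (k : ℝ) * ∑ j ∈ Finset.Icc (d + 1) m,
          ∫ ω, min (|x / a * (S j ω - S d ω)|) 2 * min (|x / a * X 1 ω|) 2 ∂μ := by
  intro S φ
  obtain ⟨d, rfl⟩ : ∃ d', d = d' + 1 := ⟨d - 1, by omega⟩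
  have hshift : IdentDistrib (fun ω s ↦ X (s + 1) ω) (fun ω s ↦ X s ω) μ μ :=
    ⟨by fun_prop, by fun_prop, hstat 1⟩
  have hφ : φ = partialSumCharFun μ X (x / a) := by
    funext j
    refine integral_congr_ae (.of_forall fun ω ↦ ?_)
    simp only [S, partialSum]
    push_cast
    ring_nf
  have hφ0 : φ 0 = 1 := by simp [hφ, partialSumCharFun, partialSum]
  calc ‖(k : ℂ) * (φ m - 1) - ((k * m : ℕ) : ℂ) * (φ (d + 1) - φ (d + 1 - 1))‖
      = k * ‖φ m - φ 0 - m • (φ (d + 1) - φ d)‖ := by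
        rw [hφ0, nsmul_eq_mul, Nat.add_sub_cancel, ← Complex.norm_natCast k, ← norm_mul]
        push_cast
        ring_nf
    _ ≤ k * (d * ‖φ (d + 1) - φ 0‖ + (d + 1) * ‖φ d - φ 0‖ + ∑ j ∈ Icc (d + 2) m,
          ∫ ω, min |x / a * (S j ω - S (d + 1) ω)| 2 * min |x / a * X 1 ω| 2 ∂μ) := by
        gcongr
        exact norm_sub_nsmul_sub_le φ _ hdm.le fun j _ ↦
          hφ ▸ norm_partialSumCharFun_increment_sub_le hmeas hshift (x / a) d j
    _ = _ := by
        rw [hφ0, Nat.add_sub_cancel]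
        push_cast
        ring

theorem telescoping_charFun_bound {Ω : Type*} [MeasurableSpace Ω]
    (μ : Measure Ω) [IsProbabilityMeasure μ]
    (X : ℤ → Ω → ℝ) (hmeas : ∀ t, Measurable (X t))
    (hstat : ∀ t : ℤ,
      μ.map (fun ω => fun s : ℤ => X (s + t) ω) = μ.map (fun ω => fun s : ℤ => X s ω))
    (a : ℝ) (ha : 0 < a) (k m d : ℕ) (hk : 0 < k) (hd : 0 < d) (hdm : d < m) (x : ℝ) :
    let S : ℕ → Ω → ℝ := fun j ω => ∑ i ∈ Finset.range j, X (i + 1) ω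
    let φ : ℕ → ℂ := fun j => ∫ ω, Complex.exp (x * S j ω / a * Complex.I) ∂μ
    ‖(k : ℂ) * (φ m - 1) - ((k * m : ℕ) : ℂ) * (φ d - φ (d - 1))‖ ≤
      (k : ℝ) * ((d : ℝ) - 1) * ‖φ d - 1‖ +
        (k : ℝ) * d * ‖φ (d - 1) - 1‖ +
        (k : ℝ) * ∑ j ∈ Finset.Icc (d + 1) m,
          ∫ ω, min (|x / a * (S j ω - S d ω)|) 2 * min (|x / a * X 1 ω|) 2 ∂μ :=
  telescoping_charFun_bound_general μ X hmeas hstat a k m d hd hdm x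
end
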